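/- Let R be a finite principal ideal ring, Ω a finite R-module, and C a collection of submodules of Ω each of length k such that any two distinct members intersect in a submodule of length at most k − δ. Then |C| · (minimum over submodules M of Ω of length k of the number of length-(k−δ+1) submodules of M) is at most the total number of length-(k−δ+1) submodules of Ω. -/

import Mathlib

/-- The length of a submodule `M` of `Ω`. -/
noncomputable def submodLength {R : Type*} [Ring R] {Ω : Type*} [AddCommGroup Ω]
    [Module R Ω] (M : Submodule R Ω) : ℕ :=
  (WithBot.unbotD 0 (Order.krullDim (Submodule R ↥M))).toNat

/-!
Double counting of the pairs `(M, N)` with `M ∈ C`, `N ≤ M` and `λ(N) = k - δ + 1`: each codeword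
`M` has at least the minimum number of such `N` below it, while each such `N` lies below at most
one codeword, because length is monotone and two distinct codewords meet in length `≤ k - δ`.
-/

section

variable {R Ω : Type*} [Ring R] [AddCommGroup Ω] [Module R Ω]

theorem submodLength_eq_toNat_length (M : Submodule R Ω) :
    submodLength M = (Module.length R M).toNat := by
  rw [submodLength, ← Module.coe_length, WithBot.unbotD_coe]

theorem submodLength_mono [Finite Ω] {N P : Submodule R Ω} (h : N ≤ P) :
    submodLength N ≤ submodLength P := by
  have := isArtinian_of_finite (R := R) (M := P)
  rw [submodLength_eq_toNat_length, submodLength_eq_toNat_length]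
  exact ENat.toNat_le_toNat
    (Module.length_le_of_injective _ (Submodule.inclusion_injective h)) Module.length_ne_top

theorem eq_of_submodLength_inf_le_of_lt [Finite Ω] {d : ℕ} {N M M' : Submodule R Ω}
    (hinf : M ≠ M' → submodLength (M ⊓ M') ≤ d) (hN : d < submodLength N)
    (hM : N ≤ M) (hM' : N ≤ M') : M = M' := by
  by_contra hne
  exact (hN.trans_le (submodLength_mono (le_inf hM hM'))).not_ge (hinf hne)

end

theorem counting_bound_submodule_codes_general (R : Type*) [CommRing R]
    (Ω : Type*) [AddCommGroup Ω] [Module R Ω] [Finite Ω]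
    (k δ : ℕ) (C : Finset (Submodule R Ω))
    (hlen : ∀ M ∈ C, submodLength M = k)
    (hdist : ∀ M ∈ C, ∀ N ∈ C, M ≠ N → submodLength (M ⊓ N) ≤ k - δ) :
    C.card * sInf ((fun M : Submodule R Ω =>
        Nat.card {N : Submodule R Ω | N ≤ M ∧ submodLength N = k - δ + 1}) ''
        {M : Submodule R Ω | submodLength M = k})
      ≤ Nat.card {N : Submodule R Ω | submodLength N = k - δ + 1} := by
  classical
  have := Fintype.ofFinite (Submodule R Ω)
  set m := sInf ((fun M : Submodule R Ω =>
    Nat.card {N : Submodule R Ω | N ≤ M ∧ submodLength N = k - δ + 1}) ''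
    {M : Submodule R Ω | submodLength M = k})
  set t := {N : Submodule R Ω | submodLength N = k - δ + 1}.toFinset
  have hcodeword : ∀ M ∈ C, m ≤ (t.bipartiteAbove (· ≥ ·) M).card := by
    intro M hM
    refine le_of_le_of_eq (Nat.sInf_le ⟨M, hlen M hM, rfl⟩) ?_
    dsimp only
    rw [Nat.card_eq_card_toFinset]
    congr 1
    ext N
    simp [t, Finset.bipartiteAbove, and_comm]
  have hunique : ∀ N ∈ t, (C.bipartiteBelow (· ≥ ·) N).card ≤ 1 := by
    intro N hN
    refine Finset.card_le_one.2 fun M hM M' hM' => ?_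
    rw [Finset.mem_bipartiteBelow] at hM hM'
    rw [Set.mem_toFinset, Set.mem_ofPred_eq] at hN
    exact eq_of_submodLength_inf_le_of_lt (hdist M hM.1 M' hM'.1) (by omega) hM.2 hM'.2
  calc _ ≤ t.card * 1 := Finset.card_mul_le_card_mul _ hcodeword hunique
    _ = _ := by rw [mul_one, Nat.card_eq_card_toFinset]

/-- **Sphere-packing-like bound.** Let `R` be a finite PIR, `Ω` a finite
`R`-module, and `C` a collection of submodules of `Ω` each of length `k` such that any
two distinct members intersect in a submodule of length at most `k - δ`. Then
`|C| · min_{λ(M)=k} #{N ≤ M : λ(N) = k-δ+1} ≤ #{N ≤ Ω : λ(N) = k-δ+1}`. -/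
theorem counting_bound_submodule_codes (R : Type*) [CommRing R] [Finite R]
    [IsPrincipalIdealRing R] (Ω : Type*) [AddCommGroup Ω] [Module R Ω] [Finite Ω]
    (k δ : ℕ) (C : Finset (Submodule R Ω))
    (hlen : ∀ M ∈ C, submodLength M = k)
    (hdist : ∀ M ∈ C, ∀ N ∈ C, M ≠ N → submodLength (M ⊓ N) ≤ k - δ) :
    C.card * sInf ((fun M : Submodule R Ω =>
        Nat.card {N : Submodule R Ω | N ≤ M ∧ submodLength N = k - δ + 1}) ''
        {M : Submodule R Ω | submodLength M = k})
      ≤ Nat.card {N : Submodule R Ω | submodLength N = k - δ + 1} :=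
  counting_bound_submodule_codes_general R Ω k δ C hlen hdist
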